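/- Constant-witness existence (part ii): For any instance (G = (V, E, α), k) of Broadcast Improvement with optimum broadcast β*, there exists a set S ⊆ V² ∖ E of size at most C(2k, 2) = 2k(2k−1)/2 such that for every pair of vertices u, v ∈ V there exists a subset W_{uv} ⊆ S of size at most 2 with prox_{G + W_{uv}}(u, v) ≥ β*α / (12k² + 3); that is, S is a (2, β*α/(12k² + 3))-witnessing solution of size at most C(2k, 2). -/

import Mathlib

open scoped Classical

variable {V : Type*} [Fintype V] [DecidableEq V]

/-- The proximity of `u` and `v` in the information graph `(V, E, α)`: the probability
that `u` and `v` are connected in a graph obtained by retaining each edge of `E`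
independently with probability `α`. -/
noncomputable def prox (E : Finset (Sym2 V)) (α : ℝ) (u v : V) : ℝ :=
  ∑ F ∈ E.powerset,
    if (SimpleGraph.fromEdgeSet (F : Set (Sym2 V))).Reachable u v then
      α ^ F.card * (1 - α) ^ (E \ F).card
    else 0

/-- The broadcast of an information graph: the minimum proximity over pairs of distinct
vertices. -/
noncomputable def broadcast (E : Finset (Sym2 V)) (α : ℝ) : ℝ :=
  ⨅ p : {p : V × V // p.1 ≠ p.2}, prox E α p.1.1 p.1.2

/-- The optimum broadcast achievable by adding at most `k` vertex pairs disjoint from `E`. -/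
noncomputable def optBroadcast (E : Finset (Sym2 V)) (α : ℝ) (k : ℕ) : ℝ :=
  ⨆ F : {F : Finset (Sym2 V) // F.card ≤ k ∧ ∀ e ∈ F, e ∉ E}, broadcast (E ∪ F.1) α

/-- The reach of a vertex `v`: the minimum proximity of `v` to any other vertex. -/
noncomputable def reach (E : Finset (Sym2 V)) (α : ℝ) (v : V) : ℝ :=
  ⨅ u : {u : V // u ≠ v}, prox E α v u.1

/-- The optimum reach of a source vertex `vs` achievable by adding at most `k`
vertex pairs disjoint from `E`. -/
noncomputable def optReach (E : Finset (Sym2 V)) (α : ℝ) (k : ℕ) (vs : V) : ℝ :=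
  ⨆ F : {F : Finset (Sym2 V) // F.card ≤ k ∧ ∀ e ∈ F, e ∉ E}, reach (E ∪ F.1) α vs

/-- The probability that, in a sampled graph, all edges of at least one member of the
family `P` of edge-lists are retained. -/
noncomputable def prPaths (E : Finset (Sym2 V)) (α : ℝ) (P : Set (List (Sym2 V))) : ℝ :=
  ∑ F ∈ E.powerset,
    if ∃ p ∈ P, ∀ e ∈ p, e ∈ F then α ^ F.card * (1 - α) ^ (E \ F).card
    else 0

/-!
Fix an optimal solution `F₀` and let `T` be its at most `2k` endpoints. A path that uses new
pairs leaves the edges of `E` at a vertex `x ∈ T` and re-enters them at a vertex `y ∈ T`, so by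
the union bound `β ≤ prox_E(u, v) + ∑_{x, y ∈ T} P(u ~ x, y ~ v)`, and one of these at most
`4k² + 1` terms is at least `β / (4k² + 1)`. Adding the single pair `xy` (kept only if it is not
already an edge) then connects `u` to `v` with probability at least `α` times that term.
-/

open SimpleGraph Finset

section SampleProb

variable {ι : Type*} [DecidableEq ι] {α : ℝ}

/-- The probability that a random subset of `E`, containing each element independently with
probability `α`, satisfies `P`. -/
noncomputable def sampleProb (E : Finset ι) (α : ℝ) (P : Finset ι → Prop) : ℝ :=
  ∑ F ∈ E.powerset, if P F then α ^ #F * (1 - α) ^ #(E \ F) else 0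

lemma pow_mul_one_sub_pow_nonneg (hα0 : 0 ≤ α) (hα1 : α ≤ 1) (m n : ℕ) :
    0 ≤ α ^ m * (1 - α) ^ n :=
  mul_nonneg (pow_nonneg hα0 _) (pow_nonneg (sub_nonneg.2 hα1) _)

lemma sampleProb_nonneg (hα0 : 0 ≤ α) (hα1 : α ≤ 1) (E : Finset ι) (P : Finset ι → Prop) :
    0 ≤ sampleProb E α P :=
  sum_nonneg fun _ _ => by
    split_ifs
    exacts [pow_mul_one_sub_pow_nonneg hα0 hα1 _ _, le_rfl]

lemma sampleProb_mono (hα0 : 0 ≤ α) (hα1 : α ≤ 1) {E : Finset ι} {P Q : Finset ι → Prop}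
    (h : ∀ F ⊆ E, P F → Q F) : sampleProb E α P ≤ sampleProb E α Q := by
  refine sum_le_sum fun F hF => ?_
  by_cases hP : P F
  · rw [if_pos hP, if_pos (h F (mem_powerset.1 hF) hP)]
  · rw [if_neg hP]
    split_ifs
    exacts [pow_mul_one_sub_pow_nonneg hα0 hα1 _ _, le_rfl]

lemma sampleProb_true (E : Finset ι) (α : ℝ) : sampleProb E α (fun _ => True) = 1 := by
  simpa [sampleProb] using (prod_add (fun _ => α) (fun _ => 1 - α) E).symm

lemma sampleProb_le_one (hα0 : 0 ≤ α) (hα1 : α ≤ 1) (E : Finset ι) (P : Finset ι → Prop) :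
    sampleProb E α P ≤ 1 :=
  (sampleProb_true E α).subst (sampleProb_mono hα0 hα1 fun _ _ _ => trivial)

lemma sampleProb_or_le (hα0 : 0 ≤ α) (hα1 : α ≤ 1) (E : Finset ι) (P Q : Finset ι → Prop) :
    sampleProb E α (fun F => P F ∨ Q F) ≤ sampleProb E α P + sampleProb E α Q := by
  rw [sampleProb, sampleProb, sampleProb, ← sum_add_distrib]
  refine sum_le_sum fun F _ => ?_
  have hw := pow_mul_one_sub_pow_nonneg hα0 hα1 #F #(E \ F)
  split_ifs <;> simp_all

lemma sampleProb_exists_le (hα0 : 0 ≤ α) (hα1 : α ≤ 1) (E : Finset ι) {κ : Type*}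
    (s : Finset κ) (P : κ → Finset ι → Prop) :
    sampleProb E α (fun F => ∃ i ∈ s, P i F) ≤ ∑ i ∈ s, sampleProb E α (P i) := by
  simp only [sampleProb]
  rw [sum_comm (s := s)]
  refine sum_le_sum fun F _ => ?_
  have hw := pow_mul_one_sub_pow_nonneg hα0 hα1 #F #(E \ F)
  have hterms : ∀ i ∈ s, 0 ≤ if P i F then α ^ #F * (1 - α) ^ #(E \ F) else 0 :=
    fun i _ => by split_ifs <;> simp [hw]
  split_ifs with h
  · obtain ⟨i, hi, hPi⟩ := h
    simpa [hPi] using single_le_sum hterms hi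
  · exact sum_nonneg hterms

/-- Conditioning on whether `a` is sampled. -/
lemma sampleProb_insert {E : Finset ι} {a : ι} (ha : a ∉ E) (P : Finset ι → Prop) :
    sampleProb (insert a E) α P =
      (1 - α) * sampleProb E α P + α * sampleProb E α (fun F => P (insert a F)) := by
  rw [sampleProb, sum_powerset_insert ha, sampleProb, sampleProb, mul_sum, mul_sum]
  congr 1 <;> refine sum_congr rfl fun F hF => ?_
  · have haF : a ∉ F := fun h => ha (mem_powerset.1 hF h)
    rw [insert_sdiff_of_notMem _ haF, card_insert_of_notMem (fun h => ha (mem_sdiff.1 h).1)]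
    split_ifs <;> ring
  · have haF : a ∉ F := fun h => ha (mem_powerset.1 hF h)
    rw [insert_sdiff_insert, sdiff_insert_of_notMem ha, card_insert_of_notMem haF]
    split_ifs <;> ring

lemma sampleProb_union_inter {E D : Finset ι} (hD : Disjoint D E) (P : Finset ι → Prop) :
    sampleProb (E ∪ D) α (fun F => P (F ∩ E)) = sampleProb E α P := by
  induction D using Finset.induction_on with
  | empty =>
    rw [union_empty]
    exact sum_congr rfl fun F hF => by simp only [inter_eq_left.2 (mem_powerset.1 hF)]
  | @insert a D haD ih =>
    obtain ⟨haE, hD⟩ := disjoint_insert_left.1 hD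
    rw [union_insert, sampleProb_insert (by simp [haE, haD])]
    simp only [insert_inter_of_notMem haE, ih hD]
    ring

lemma sampleProb_le_erase (hα0 : 0 ≤ α) (hα1 : α ≤ 1) {E : Finset ι} (a : ι)
    {P : Finset ι → Prop} (hP : Monotone P) :
    sampleProb E α P ≤ sampleProb (E.erase a) α (fun F => P (insert a F)) := by
  have hins : ∀ F, P F → P (insert a F) := fun F => hP (subset_insert a F)
  by_cases ha : a ∈ E
  · conv_lhs => rw [← insert_erase ha, sampleProb_insert (notMem_erase a E)]
    have := sampleProb_mono hα0 hα1 (E := E.erase a) fun F _ => hins F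
    nlinarith
  · rw [erase_eq_of_notMem ha]
    exact sampleProb_mono hα0 hα1 fun F _ => hins F

lemma mul_sampleProb_le_insert (hα0 : 0 ≤ α) (hα1 : α ≤ 1) (E : Finset ι) (a : ι)
    {P : Finset ι → Prop} (hP : Monotone P) :
    α * sampleProb E α P ≤ sampleProb (insert a E) α (fun F => P F ∧ a ∈ F) := by
  have hE : insert a E = insert a (E.erase a) := by
    ext b; by_cases hb : b = a <;> simp [hb]
  rw [hE, sampleProb_insert (notMem_erase a E)]
  have hsampled : sampleProb (E.erase a) α (fun F => P (insert a F)) ≤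
      sampleProb (E.erase a) α (fun F => P (insert a F) ∧ a ∈ insert a F) :=
    sampleProb_mono hα0 hα1 fun F _ h => ⟨h, mem_insert_self a F⟩
  nlinarith [sampleProb_le_erase hα0 hα1 (E := E) a hP,
    sampleProb_nonneg hα0 hα1 (E.erase a) (fun F => P F ∧ a ∈ F)]

end SampleProb

section Pigeonhole

variable {K : Type*} [Field K] [LinearOrder K] [IsStrictOrderedRing K]

lemma le_or_exists_le_of_le_add_sum {ι : Type*} {s : Finset ι} {f : ι → K} {a b : K}
    (h : b ≤ a + ∑ i ∈ s, f i) : b / (#s + 1) ≤ a ∨ ∃ i ∈ s, b / (#s + 1) ≤ f i := by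
  by_contra! hcon
  obtain ⟨ha, hf⟩ := hcon
  have hsum : ∑ i ∈ s, f i ≤ #s * (b / (#s + 1)) := by
    simpa using sum_le_card_nsmul s f _ fun i hi => (hf i hi).le
  have hb : b = (#s + 1) * (b / (#s + 1)) := by field_simp
  linarith

end Pigeonhole

namespace SimpleGraph

variable {W : Type*}

lemma monotone_reachable_fromEdgeSet (u v : W) :
    Monotone fun F : Finset (Sym2 W) => (fromEdgeSet ↑F).Reachable u v :=
  fun _ _ h r => r.mono (fromEdgeSet_mono (coe_subset.2 h))

lemma Walk.reachable_or_exists_exit {F A : Set (Sym2 W)} {u v : W}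
    (p : (fromEdgeSet F).Walk u v) :
    (fromEdgeSet A).Reachable u v ∨ ∃ e ∈ F \ A, ∃ x ∈ e, (fromEdgeSet A).Reachable u x := by
  induction p with
  | nil => exact Or.inl (Reachable.refl _)
  | @cons a b c hab p ih =>
    rw [fromEdgeSet_adj] at hab
    by_cases he : s(a, b) ∈ A
    · have hA : (fromEdgeSet A).Reachable a b := ((fromEdgeSet_adj A).2 ⟨he, hab.2⟩).reachable
      rcases ih with h | ⟨e, he, x, hx, h⟩
      · exact Or.inl (hA.trans h)
      · exact Or.inr ⟨e, he, x, hx, hA.trans h⟩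
    · exact Or.inr ⟨s(a, b), ⟨hab.1, he⟩, a, Sym2.mem_mk_left a b, Reachable.refl _⟩

lemma Reachable.fromEdgeSet_or_exists_exits {F A : Set (Sym2 W)} {u v : W}
    (h : (fromEdgeSet F).Reachable u v) :
    (fromEdgeSet A).Reachable u v ∨ ∃ x y, (∃ e ∈ F \ A, x ∈ e) ∧ (∃ e ∈ F \ A, y ∈ e) ∧
      (fromEdgeSet A).Reachable u x ∧ (fromEdgeSet A).Reachable y v := by
  obtain ⟨p⟩ := h
  rcases Walk.reachable_or_exists_exit (A := A) p with h | ⟨e, he, x, hx, hux⟩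
  · exact Or.inl h
  rcases Walk.reachable_or_exists_exit (A := A) p.reverse with h | ⟨e', he', y, hy, hvy⟩
  · exact Or.inl h.symm
  exact Or.inr ⟨x, y, ⟨e, he, hx⟩, ⟨e', he', hy⟩, hux, hvy.symm⟩

end SimpleGraph

lemma card_biUnion_toFinset_le {W : Type*} [DecidableEq W] (F : Finset (Sym2 W)) :
    #(F.biUnion Sym2.toFinset) ≤ 2 * #F :=
  (card_biUnion_le_card_mul _ _ 2 fun e _ => by
    rw [Sym2.card_toFinset]; split_ifs <;> omega).trans_eq (mul_comm _ _)

lemma prox_eq_sampleProb (E : Finset (Sym2 V)) (α : ℝ) (u v : V) :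
    prox E α u v = sampleProb E α (fun F => (fromEdgeSet ↑F).Reachable u v) := by
  unfold prox sampleProb
  congr!

noncomputable def proxVia (E : Finset (Sym2 V)) (α : ℝ) (u x y v : V) : ℝ :=
  sampleProb E α fun F => (fromEdgeSet ↑F).Reachable u x ∧ (fromEdgeSet ↑F).Reachable y v

lemma proxVia_le_prox {α : ℝ} (hα0 : 0 ≤ α) (hα1 : α ≤ 1) (E : Finset (Sym2 V)) (u x v : V) :
    proxVia E α u x x v ≤ prox E α u v := by
  rw [prox_eq_sampleProb]
  exact sampleProb_mono hα0 hα1 fun F _ h => h.1.trans h.2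

/-- Adding the pair `s(x, y)` joins the two halves of the event of `proxVia` whenever that pair is
sampled, which happens with probability `α` independently of the rest. -/
lemma mul_proxVia_le_prox_insert {α : ℝ} (hα0 : 0 ≤ α) (hα1 : α ≤ 1) (E : Finset (Sym2 V))
    {x y : V} (hxy : x ≠ y) (u v : V) :
    α * proxVia E α u x y v ≤ prox (insert s(x, y) E) α u v := by
  have hmono : Monotone fun F : Finset (Sym2 V) =>
      (fromEdgeSet ↑F).Reachable u x ∧ (fromEdgeSet ↑F).Reachable y v :=
    fun F G hFG h => ⟨monotone_reachable_fromEdgeSet u x hFG h.1,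
      monotone_reachable_fromEdgeSet y v hFG h.2⟩
  refine (mul_sampleProb_le_insert hα0 hα1 E s(x, y) hmono).trans ?_
  rw [prox_eq_sampleProb]
  refine sampleProb_mono hα0 hα1 fun F _ ⟨⟨hux, hyv⟩, hxyF⟩ => ?_
  exact (hux.trans ((fromEdgeSet_adj _).2 ⟨hxyF, hxy⟩).reachable).trans hyv

/-- Union bound: a path using some of the new pairs `D` leaves the old edges at an endpoint
of `D`, and returns to them at another one. -/
lemma prox_union_le {α : ℝ} (hα0 : 0 ≤ α) (hα1 : α ≤ 1) {E D : Finset (Sym2 V)}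
    (hD : Disjoint D E) {T : Finset V} (hT : ∀ e ∈ D, ∀ x ∈ e, x ∈ T) (u v : V) :
    prox (E ∪ D) α u v ≤ prox E α u v + ∑ p ∈ T ×ˢ T, proxVia E α u p.1 p.2 v := by
  have hsplit : ∀ F ⊆ E ∪ D, (fromEdgeSet ↑F).Reachable u v →
      (fromEdgeSet ↑(F ∩ E)).Reachable u v ∨
        ∃ p ∈ T ×ˢ T, (fromEdgeSet ↑(F ∩ E)).Reachable u p.1 ∧
          (fromEdgeSet ↑(F ∩ E)).Reachable p.2 v := by
    intro F hF h
    have hexit : ∀ x, (∃ e ∈ (F : Set (Sym2 V)) \ ↑(F ∩ E), x ∈ e) → x ∈ T := by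
      rintro x ⟨e, ⟨heF, heFE⟩, hx⟩
      have heE : e ∉ E := fun heE => heFE (mem_coe.2 (mem_inter.2 ⟨heF, heE⟩))
      exact hT e ((mem_union.1 (hF heF)).resolve_left heE) x hx
    rcases Reachable.fromEdgeSet_or_exists_exits h with h | ⟨x, y, hx, hy, hux, hyv⟩
    · exact Or.inl h
    · exact Or.inr ⟨(x, y), mem_product.2 ⟨hexit x hx, hexit y hy⟩, hux, hyv⟩
  calc prox (E ∪ D) α u v
      ≤ sampleProb (E ∪ D) α fun F => (fromEdgeSet ↑(F ∩ E)).Reachable u v ∨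
          ∃ p ∈ T ×ˢ T, (fromEdgeSet ↑(F ∩ E)).Reachable u p.1 ∧
            (fromEdgeSet ↑(F ∩ E)).Reachable p.2 v := by
        rw [prox_eq_sampleProb]
        exact sampleProb_mono hα0 hα1 hsplit
    _ ≤ prox E α u v + ∑ p ∈ T ×ˢ T, proxVia E α u p.1 p.2 v := by
        refine (sampleProb_or_le hα0 hα1 _ _ _).trans (add_le_add ?_ ?_)
        · rw [prox_eq_sampleProb,
            ← sampleProb_union_inter hD fun F => (fromEdgeSet ↑F).Reachable u v]
        · refine (sampleProb_exists_le hα0 hα1 _ _ _).trans (sum_le_sum fun p _ => ?_)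
          rw [proxVia, ← sampleProb_union_inter hD fun F =>
            (fromEdgeSet ↑F).Reachable u p.1 ∧ (fromEdgeSet ↑F).Reachable p.2 v]

lemma exists_subset_singleton_mul_le_prox {α c : ℝ} (hα0 : 0 ≤ α) (hα1 : α ≤ 1)
    {E : Finset (Sym2 V)} {u x y v : V} (h : c ≤ proxVia E α u x y v) :
    ∃ W ⊆ ({s(x, y)} : Finset (Sym2 V)), (∀ e ∈ W, x ≠ y ∧ e ∉ E) ∧
      α * c ≤ prox (E ∪ W) α u v := by
  have hc : α * c ≤ α * proxVia E α u x y v := mul_le_mul_of_nonneg_left h hα0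
  by_cases hxy : x = y
  · subst hxy
    refine ⟨∅, empty_subset _, by simp, ?_⟩
    calc α * c ≤ α * proxVia E α u x x v := hc
      _ ≤ proxVia E α u x x v := mul_le_of_le_one_left (sampleProb_nonneg hα0 hα1 _ _) hα1
      _ ≤ prox (E ∪ ∅) α u v := by rw [union_empty]; exact proxVia_le_prox hα0 hα1 E u x v
  by_cases he : s(x, y) ∈ E
  · refine ⟨∅, empty_subset _, by simp, ?_⟩
    rw [union_empty, ← insert_eq_of_mem he]
    exact hc.trans (mul_proxVia_le_prox_insert hα0 hα1 E hxy u v)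
  · refine ⟨{s(x, y)}, subset_rfl, fun e he' => ⟨hxy, mem_singleton.1 he' ▸ he⟩, ?_⟩
    rw [union_singleton]
    exact hc.trans (mul_proxVia_le_prox_insert hα0 hα1 E hxy u v)

lemma prox_nonneg {α : ℝ} (hα0 : 0 ≤ α) (hα1 : α ≤ 1) (E : Finset (Sym2 V)) (u v : V) :
    0 ≤ prox E α u v :=
  prox_eq_sampleProb E α u v ▸ sampleProb_nonneg hα0 hα1 _ _

lemma prox_self (E : Finset (Sym2 V)) (α : ℝ) (u : V) : prox E α u u = 1 := by
  simp [prox_eq_sampleProb, sampleProb_true]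

lemma broadcast_nonneg {α : ℝ} (hα0 : 0 ≤ α) (hα1 : α ≤ 1) (E : Finset (Sym2 V)) :
    0 ≤ broadcast E α :=
  Real.iInf_nonneg fun _ => prox_nonneg hα0 hα1 _ _ _

lemma broadcast_le_prox {α : ℝ} (hα0 : 0 ≤ α) (hα1 : α ≤ 1) (E : Finset (Sym2 V)) (u v : V) :
    broadcast E α ≤ prox E α u v := by
  by_cases huv : u = v
  · subst huv
    rw [prox_self]
    rcases isEmpty_or_nonempty {p : V × V // p.1 ≠ p.2} with _ | ⟨⟨p⟩⟩
    · rw [broadcast, Real.iInf_of_isEmpty]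
      exact zero_le_one
    · calc broadcast E α ≤ prox E α p.1.1 p.1.2 := ciInf_le (Set.finite_range _).bddBelow p
        _ ≤ 1 := prox_eq_sampleProb E α _ _ ▸ sampleProb_le_one hα0 hα1 _ _
  · exact ciInf_le (Set.finite_range _).bddBelow (⟨(u, v), huv⟩ : {p : V × V // p.1 ≠ p.2})

lemma exists_optBroadcast_eq (E : Finset (Sym2 V)) (α : ℝ) (k : ℕ) :
    ∃ F : Finset (Sym2 V), #F ≤ k ∧ (∀ e ∈ F, e ∉ E) ∧
      broadcast (E ∪ F) α = optBroadcast E α k := by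
  have : Nonempty {F : Finset (Sym2 V) // #F ≤ k ∧ ∀ e ∈ F, e ∉ E} := ⟨⟨∅, by simp⟩⟩
  obtain ⟨⟨F, hFk, hFE⟩, hF⟩ := exists_eq_ciSup_of_finite
    (f := fun F : {F : Finset (Sym2 V) // #F ≤ k ∧ ∀ e ∈ F, e ∉ E} => broadcast (E ∪ F.1) α)
  exact ⟨F, hFk, hFE, hF⟩

/-- constant-witness existence (part ii). -/
theorem constant_witness_existence_ii
    (E : Finset (Sym2 V)) (α : ℝ) (hα0 : 0 ≤ α) (hα1 : α ≤ 1) (k : ℕ) :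
    ∃ S : Finset (Sym2 V), (∀ e ∈ S, e ∉ E) ∧ S.card ≤ Nat.choose (2 * k) 2 ∧
      ∀ u v : V, ∃ W ⊆ S, W.card ≤ 2 ∧
        optBroadcast E α k * α / (12 * (k : ℝ) ^ 2 + 3) ≤ prox (E ∪ W) α u v := by
  obtain ⟨F₀, hF₀k, hF₀E, hF₀⟩ := exists_optBroadcast_eq E α k
  set β := optBroadcast E α k
  set T := F₀.biUnion Sym2.toFinset
  have hTk : #T ≤ 2 * k := (card_biUnion_toFinset_le F₀).trans (by omega)
  refine ⟨(T.offDiag.image Sym2.mk.uncurry).filter (· ∉ E), fun e he => (mem_filter.1 he).2,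
    (card_filter_le _ _).trans ((Sym2.card_image_offDiag T).trans_le (Nat.choose_le_choose 2 hTk)),
    fun u v => ?_⟩
  have hβ : β ≤ prox E α u v + ∑ p ∈ T ×ˢ T, proxVia E α u p.1 p.2 v :=
    hF₀ ▸ (broadcast_le_prox hα0 hα1 _ u v).trans (prox_union_le hα0 hα1
      (disjoint_left.2 hF₀E) (fun e he x hx => mem_biUnion.2 ⟨e, he, Sym2.mem_toFinset.2 hx⟩) u v)
  have hβ0 : 0 ≤ β := hF₀ ▸ broadcast_nonneg hα0 hα1 _
  have hc : β * α / (12 * (k : ℝ) ^ 2 + 3) ≤ α * (β / (#(T ×ˢ T) + 1)) := by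
    have hTk' : (#T : ℝ) ≤ 2 * k := by exact_mod_cast hTk
    rw [mul_div_assoc', mul_comm α β, card_product, Nat.cast_mul]
    exact div_le_div_of_nonneg_left (by positivity) (by positivity) (by nlinarith)
  rcases le_or_exists_le_of_le_add_sum hβ with h | ⟨⟨x, y⟩, hxy, h⟩
  · refine ⟨∅, empty_subset _, by simp, ?_⟩
    rw [union_empty]
    exact hc.trans ((mul_le_of_le_one_left (by positivity) hα1).trans h)
  · obtain ⟨hx, hy⟩ := mem_product.1 hxy
    obtain ⟨W, hWxy, hWE, hW⟩ := exists_subset_singleton_mul_le_prox hα0 hα1 h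
    refine ⟨W, fun e he => ?_, (card_le_card hWxy).trans (by simp), hc.trans hW⟩
    obtain ⟨hne, heE⟩ := hWE e he
    rw [mem_singleton.1 (hWxy he)] at heE ⊢
    exact mem_filter.2 ⟨mem_image.2 ⟨(x, y), mem_offDiag.2 ⟨hx, hy, hne⟩, rfl⟩, heE⟩
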